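/- arXiv:1603.06049 — 3 statements merged into one kernel-verified Lean document; each statement's English description precedes it below -/
import Mathlib

section
/- Let H be a Hermitian operator on a bipartite finite-dimensional Hilbert space H_{L0} ⊗ H_{∂L}, and let ρ be a density matrix on the same space such that Tr(ρ[H,A⊗1]) = 0 for every anti-Hermitian operator A on H_{L0}. Then the partial trace over H_{∂L} of the commutator [ρ, H] vanishes: Tr_{∂L}[ρ, H] = 0. -/
open scoped ComplexOrder
open Matrix Kronecker Complex

/-- Partial trace over the second tensor factor. -/
noncomputable def ptraceSnd {a b : ℕ} (M : Matrix (Fin a × Fin b) (Fin a × Fin b) ℂ) :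
    Matrix (Fin a) (Fin a) ℂ :=
  fun i j => ∑ k : Fin b, M (i, k) (j, k)

lemma trace_mul_kron_one {a b : ℕ} (M : Matrix (Fin a × Fin b) (Fin a × Fin b) ℂ)
    (A : Matrix (Fin a) (Fin a) ℂ) :
    (M * (A ⊗ₖ (1 : Matrix (Fin b) (Fin b) ℂ))).trace = (ptraceSnd M * A).trace := by
  simp only [Matrix.trace, Matrix.diag, Matrix.mul_apply, ptraceSnd, kroneckerMap_apply,
    Fintype.sum_prod_type, Matrix.one_apply, mul_ite, mul_one, mul_zero,
    Finset.sum_ite_eq, Finset.mem_univ, if_true, Finset.sum_mul]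
  refine Finset.sum_congr rfl fun i _ => ?_
  simp only [Finset.sum_ite_eq', Finset.mem_univ, if_true]
  exact Finset.sum_comm

/-- If `Tr(ρ [H, A ⊗ 1]) = 0` for every anti-Hermitian `A` on the first factor,
then `Tr_{∂L}[ρ, H] = 0`. -/
theorem ptrace_commutator_vanishes {a b : ℕ}
    (H ρ : Matrix (Fin a × Fin b) (Fin a × Fin b) ℂ)
    (hH : H.IsHermitian) (hρ : ρ.PosSemidef) (hρtr : ρ.trace = 1)
    (hcomm : ∀ A : Matrix (Fin a) (Fin a) ℂ, Aᴴ = -A →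
      (ρ * (H * (A ⊗ₖ (1 : Matrix (Fin b) (Fin b) ℂ))
          - (A ⊗ₖ (1 : Matrix (Fin b) (Fin b) ℂ)) * H)).trace = 0) :
    ptraceSnd (ρ * H - H * ρ) = 0 := by
  set M := ρ * H - H * ρ with hM
  set P := ptraceSnd M with hP
  -- key : for anti-Hermitian A, Tr(P A) = 0
  have key : ∀ A : Matrix (Fin a) (Fin a) ℂ, Aᴴ = -A → (P * A).trace = 0 := by
    intro A hA
    have h1 := hcomm A hA
    set B := A ⊗ₖ (1 : Matrix (Fin b) (Fin b) ℂ) with hB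
    have h2 : (ρ * (H * B - B * H)).trace = (M * B).trace := by
      rw [hM, Matrix.sub_mul, Matrix.mul_sub, Matrix.trace_sub, Matrix.trace_sub,
        Matrix.mul_assoc, Matrix.mul_assoc]
      congr 1
      rw [← Matrix.mul_assoc, Matrix.trace_mul_cycle ρ B H, Matrix.mul_assoc]
    rw [← trace_mul_kron_one M A, ← hB, ← h2, h1]
  -- P is anti-Hermitian
  have hPanti : Pᴴ = -P := by
    ext i j
    simp only [hP, conjTranspose_apply, ptraceSnd, star_sum, neg_apply, Matrix.neg_apply,
      ← Finset.sum_neg_distrib]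
    refine Finset.sum_congr rfl fun k _ => ?_
    have : star (M (j, k) (i, k)) = Mᴴ (i, k) (j, k) := rfl
    rw [this]
    have hManti : Mᴴ = -M := by
      rw [hM, conjTranspose_sub, conjTranspose_mul, conjTranspose_mul,
        hH.eq, hρ.1.eq, neg_sub]
    rw [hManti]
    rfl
  -- apply key to P itself
  have h3 : (P * P).trace = 0 := key P hPanti
  have h4 : (Pᴴ * P).trace = 0 := by
    rw [hPanti, Matrix.neg_mul, Matrix.trace_neg, h3, neg_zero]
  -- diagonal entries of Pᴴ * P are nonneg and sum to zero
  have hdiag : ∀ j, (Pᴴ * P) j j = 0 := by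
    have hnn : ∀ j ∈ Finset.univ, (0 : ℂ) ≤ (Pᴴ * P) j j := by
      intro j _
      have : (Pᴴ * P) j j = dotProduct (star fun i => P i j) (fun i => P i j) := by
        simp [Matrix.mul_apply, dotProduct, conjTranspose_apply]
      rw [this]
      exact dotProduct_star_self_nonneg _
    intro j
    exact (Finset.sum_eq_zero_iff_of_nonneg hnn).mp h4 j (Finset.mem_univ j)
  have hPzero : P = 0 := by
    ext i j
    have h5 : dotProduct (star fun i => P i j) (fun i => P i j) = 0 := by
      rw [← hdiag j]
      simp [Matrix.mul_apply, dotProduct, conjTranspose_apply]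
    have := dotProduct_star_self_eq_zero.mp h5
    exact congrFun this i
  exact hPzero
end

section
/- Let |Ω⟩ be a pure state on a bipartite system H_{L^c} ⊗ H_L that is an eigenstate of a Hamiltonian H on the full system. Let H_L be an operator acting nontrivially only on H_L, and suppose [H, 1 ⊗ A] = 1 ⊗ [H_L, A] for all operators A supported on a subsystem L_0 of L. Then the reduced density matrix ρ_L = Tr_{L^c}(|Ω⟩⟨Ω|) satisfies Tr_{∂L}[ρ_L, H_L] = 0, where ∂L is the complement of L_0 inside L. -/
open Matrix Kronecker Complex

private lemma cyc4 {α β γ δ : Type*} [Fintype α] [Fintype β] [Fintype γ] [Fintype δ]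
    (f : α → β → γ → δ → ℂ) :
    ∑ k : α, ∑ p : β, ∑ q : γ, ∑ m : δ, f k p q m
      = ∑ m : δ, ∑ k : α, ∑ p : β, ∑ q : γ, f k p q m := by
  rw [show (∑ k : α, ∑ p : β, ∑ q : γ, ∑ m : δ, f k p q m)
      = ∑ k : α, ∑ p : β, ∑ m : δ, ∑ q : γ, f k p q m from
    Finset.sum_congr rfl fun k _ => Finset.sum_congr rfl fun p _ => Finset.sum_comm]
  rw [show (∑ k : α, ∑ p : β, ∑ m : δ, ∑ q : γ, f k p q m)
      = ∑ k : α, ∑ m : δ, ∑ p : β, ∑ q : γ, f k p q m from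
    Finset.sum_congr rfl fun k _ => Finset.sum_comm]
  exact Finset.sum_comm

private lemma cyc3 {α β γ : Type*} [Fintype α] [Fintype β] [Fintype γ]
    (f : α → β → γ → ℂ) :
    ∑ k : α, ∑ p : β, ∑ q : γ, f k p q = ∑ p : β, ∑ q : γ, ∑ k : α, f k p q := by
  rw [Finset.sum_comm]
  exact Finset.sum_congr rfl fun p _ => Finset.sum_comm

private lemma dot_kron {c n : ℕ} {m : ℕ} (Ω : Fin c × (Fin n × Fin m) → ℂ)
    (C : Matrix (Fin n × Fin m) (Fin n × Fin m) ℂ) :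
    star Ω ⬝ᵥ (((1 : Matrix (Fin c) (Fin c) ℂ) ⊗ₖ C) *ᵥ Ω)
      = ∑ k : Fin c, ∑ x : Fin n × Fin m, ∑ y : Fin n × Fin m,
          star (Ω (k, x)) * C x y * Ω (k, y) := by
  simp only [dotProduct, mulVec, dotProduct, kroneckerMap_apply, Matrix.one_apply,
    Fintype.sum_prod_type, ite_mul, zero_mul, one_mul, mul_ite, mul_zero]
  refine Finset.sum_congr rfl fun k _ => Finset.sum_congr rfl fun x _ =>
    Finset.sum_congr rfl fun y _ => ?_
  rw [cyc3]
  simp [Finset.mul_sum, mul_assoc]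

private lemma ite_sum_pull {α : Type*} [Fintype α] (P : Prop) [Decidable P] (f : α → ℂ) :
    ∑ y : α, (if P then f y else 0) = if P then ∑ y : α, f y else 0 := by
  split <;> simp

private lemma delta_fst {n m : ℕ} (i : Fin n) (f : Fin n × Fin m → ℂ) :
    ∑ y : Fin n × Fin m, (if i = y.1 then f y else 0) = ∑ y2 : Fin m, f (i, y2) := by
  rw [Fintype.sum_prod_type, Finset.sum_comm]
  simp

/-- Partial trace over the second tensor factor (the boundary `∂L`). -/
noncomputable def ptraceBdry {a b : ℕ} (M : Matrix (Fin a × Fin b) (Fin a × Fin b) ℂ) :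
    Matrix (Fin a) (Fin a) ℂ :=
  fun i j => ∑ k : Fin b, M (i, k) (j, k)

/-- If `Ω` is an eigenstate of `H` on `H_{L^c} ⊗ (H_{L0} ⊗ H_{∂L})` and
`[H, 1 ⊗ (A ⊗ 1)] = 1 ⊗ [H_L, A ⊗ 1]` for all `A` on `L_0`, then the reduced
density matrix `ρ_L = Tr_{L^c}|Ω⟩⟨Ω|` satisfies `Tr_{∂L}[ρ_L, H_L] = 0`. -/
theorem reduced_state_commutator_constraint {c a b : ℕ}
    (H : Matrix (Fin c × (Fin a × Fin b)) (Fin c × (Fin a × Fin b)) ℂ)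
    (hH : H.IsHermitian)
    (Ω : Fin c × (Fin a × Fin b) → ℂ)
    (hnorm : star Ω ⬝ᵥ Ω = 1)
    (e : ℝ) (heig : H *ᵥ Ω = (e : ℂ) • Ω)
    (HL : Matrix (Fin a × Fin b) (Fin a × Fin b) ℂ) (hHL : HL.IsHermitian)
    (hsupp : ∀ A : Matrix (Fin a) (Fin a) ℂ,
      H * ((1 : Matrix (Fin c) (Fin c) ℂ) ⊗ₖ (A ⊗ₖ (1 : Matrix (Fin b) (Fin b) ℂ)))
        - ((1 : Matrix (Fin c) (Fin c) ℂ) ⊗ₖ (A ⊗ₖ (1 : Matrix (Fin b) (Fin b) ℂ))) * H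
      = (1 : Matrix (Fin c) (Fin c) ℂ) ⊗ₖ
          (HL * (A ⊗ₖ (1 : Matrix (Fin b) (Fin b) ℂ))
            - (A ⊗ₖ (1 : Matrix (Fin b) (Fin b) ℂ)) * HL))
    (ρL : Matrix (Fin a × Fin b) (Fin a × Fin b) ℂ)
    (hρL : ρL = fun i j => ∑ k : Fin c, Ω (k, i) * star (Ω (k, j))) :
    ptraceBdry (ρL * HL - HL * ρL) = 0 := by
  have key : ∀ B : Matrix (Fin c × (Fin a × Fin b)) (Fin c × (Fin a × Fin b)) ℂ,
      star Ω ⬝ᵥ ((H * B - B * H) *ᵥ Ω) = 0 := by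
    intro B
    have hstar : star Ω ᵥ* H = (e : ℂ) • star Ω := by
      rw [← hH.eq, ← Matrix.star_mulVec, heig]; simp
    rw [Matrix.sub_mulVec, dotProduct_sub, ← Matrix.mulVec_mulVec, ← Matrix.mulVec_mulVec,
        Matrix.dotProduct_mulVec, hstar, heig, Matrix.mulVec_smul, dotProduct_smul,
        smul_dotProduct, sub_self]
  ext i j
  set E : Matrix (Fin a) (Fin a) ℂ := Matrix.single j i 1 with hE
  set C : Matrix (Fin a × Fin b) (Fin a × Fin b) ℂ :=
    HL * (E ⊗ₖ (1 : Matrix (Fin b) (Fin b) ℂ))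
      - (E ⊗ₖ (1 : Matrix (Fin b) (Fin b) ℂ)) * HL with hC
  have h0 : star Ω ⬝ᵥ (((1 : Matrix (Fin c) (Fin c) ℂ) ⊗ₖ C) *ᵥ Ω) = 0 := by
    rw [hC, ← hsupp E]; exact key _
  rw [dot_kron] at h0
  -- entries of C
  have h1 : ∀ x y : Fin a × Fin b, (HL * (E ⊗ₖ (1 : Matrix (Fin b) (Fin b) ℂ))) x y
      = if i = y.1 then HL x (j, y.2) else 0 := by
    rintro x ⟨y1, y2⟩
    simp [Matrix.mul_apply, hE, Matrix.single, Matrix.one_apply,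
      Fintype.sum_prod_type, ite_and, mul_ite, ite_mul, mul_zero, zero_mul,
      Finset.sum_ite_eq, Finset.sum_ite_eq']
  have h2 : ∀ x y : Fin a × Fin b, ((E ⊗ₖ (1 : Matrix (Fin b) (Fin b) ℂ)) * HL) x y
      = if j = x.1 then HL (i, x.2) y else 0 := by
    rintro ⟨x1, x2⟩ y
    simp [Matrix.mul_apply, hE, Matrix.single, Matrix.one_apply,
      Fintype.sum_prod_type, ite_and, mul_ite, ite_mul, mul_zero, zero_mul,
      Finset.sum_ite_eq, Finset.sum_ite_eq']
  -- rewrite the zero identity into explicit form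
  have hz : (∑ m : Fin c, ∑ x : Fin a × Fin b, ∑ y2 : Fin b,
        star (Ω (m, x)) * HL x (j, y2) * Ω (m, (i, y2)))
      - (∑ m : Fin c, ∑ x2 : Fin b, ∑ y : Fin a × Fin b,
        star (Ω (m, (j, x2))) * HL (i, x2) y * Ω (m, y)) = 0 := by
    rw [← h0]
    rw [← Finset.sum_sub_distrib]
    refine Finset.sum_congr rfl fun m _ => ?_
    have inner : ∀ x : Fin a × Fin b,
        ∑ y : Fin a × Fin b, star (Ω (m, x)) * C x y * Ω (m, y)
          = (∑ y2 : Fin b, star (Ω (m, x)) * HL x (j, y2) * Ω (m, (i, y2)))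
            - (if j = x.1 then ∑ y : Fin a × Fin b,
                star (Ω (m, x)) * HL (i, x.2) y * Ω (m, y) else 0) := by
      intro x
      have : ∀ y : Fin a × Fin b, star (Ω (m, x)) * C x y * Ω (m, y)
          = (if i = y.1 then star (Ω (m, x)) * HL x (j, y.2) * Ω (m, y) else 0)
            - (if j = x.1 then star (Ω (m, x)) * HL (i, x.2) y * Ω (m, y) else 0) := by
        intro y
        rw [hC, Matrix.sub_apply, h1, h2]
        split <;> split <;> ring
      simp only [this, Finset.sum_sub_distrib, delta_fst, ite_sum_pull]
    simp only [inner, Finset.sum_sub_distrib]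
    congr 1
    rw [Fintype.sum_prod_type]
    dsimp only
    simp [ite_sum_pull, Finset.sum_ite_eq]
  -- now the main goal
  simp only [ptraceBdry, Matrix.zero_apply, Matrix.sub_apply, Matrix.mul_apply]
  simp only [ptraceBdry, Matrix.zero_apply, hρL, Matrix.sub_apply, Matrix.mul_apply,
    Fintype.sum_prod_type, Finset.sum_mul, Finset.mul_sum, Finset.sum_sub_distrib,
    Matrix.of_apply]
  rw [← hz]
  congr 1
  · -- first terms
    conv_lhs => rw [cyc4]
    refine Finset.sum_congr rfl fun m _ => ?_
    conv_lhs => rw [cyc3]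
    conv_rhs => rw [Fintype.sum_prod_type]
    refine Finset.sum_congr rfl fun x1 _ => Finset.sum_congr rfl fun x2 _ =>
      Finset.sum_congr rfl fun k _ => by ring
  · -- second terms
    conv_lhs => rw [cyc4]
    refine Finset.sum_congr rfl fun m _ => ?_
    refine Finset.sum_congr rfl fun x2 _ => ?_
    conv_rhs => rw [Fintype.sum_prod_type]

    refine Finset.sum_congr rfl fun y1 _ => Finset.sum_congr rfl fun y2 _ => by ring
end

section
/- Let |Ω⟩ be a unit vector in a bipartite Hilbert space with reduced density matrix ρ_L on the subsystem L whose smallest nonzero eigenvalue is λ_min². Let B be a Hermitian operator on L with ‖B‖ ≤ 1, let P_V be the projector onto the range of ρ_L, and let b be any eigenvalue of B_L := P_V B P_V restricted to V. Suppose that there exists δ ≥ 0 such that for every operator C supported only on L^c with ‖C‖ ≤ λ_min^{-2}, |⟨Ω|CB|Ω⟩ − ⟨Ω|C|Ω⟩⟨Ω|B|Ω⟩| ≤ ‖B‖·‖C‖·δ. Then |b − ⟨Ω|B|Ω⟩| ≤ λ_min^{-2}·δ. -/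
open Matrix Kronecker Complex

lemma aux_dot_kron {p q : ℕ} (Ω : Fin p × Fin q → ℂ) (u : Fin p → ℂ) (vv : Fin q → ℂ)
    (B : Matrix (Fin q) (Fin q) ℂ)
    (key1 : ∀ i, ∑ k, star (Ω (k, i)) * u k = star (vv i))
    (key2 : ∀ j, ∑ l, star (u l) * Ω (l, j) = vv j) :
    star Ω ⬝ᵥ (((Matrix.vecMulVec u (star u)) ⊗ₖ B) *ᵥ Ω) = star vv ⬝ᵥ (B *ᵥ vv) := by
  have inner : ∀ k i, ((Matrix.vecMulVec u (star u) ⊗ₖ B) *ᵥ Ω) (k, i)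
      = u k * (B *ᵥ vv) i := by
    intro k i
    show ∑ x : Fin p × Fin q, (Matrix.vecMulVec u (star u) ⊗ₖ B) (k, i) x * Ω x
        = u k * (B *ᵥ vv) i
    rw [Fintype.sum_prod_type]
    simp only [Matrix.kroneckerMap_apply, Matrix.vecMulVec_apply, Pi.star_apply]
    rw [Finset.sum_comm]
    have hj : ∀ j, ∑ l, u k * star (u l) * B i j * Ω (l, j) = u k * (B i j * vv j) := by
      intro j
      rw [← key2 j, Finset.mul_sum, Finset.mul_sum]
      exact Finset.sum_congr rfl fun l _ => by ring
    rw [Finset.sum_congr rfl fun j _ => hj j, ← Finset.mul_sum]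
    rfl
  show ∑ x : Fin p × Fin q, star (Ω x) * ((Matrix.vecMulVec u (star u) ⊗ₖ B) *ᵥ Ω) x
      = star vv ⬝ᵥ (B *ᵥ vv)
  rw [Fintype.sum_prod_type]
  simp only [inner]
  rw [Finset.sum_comm]
  refine Finset.sum_congr rfl fun i _ => ?_
  have : ∑ k, star (Ω (k, i)) * (u k * (B *ᵥ vv) i)
      = (∑ k, star (Ω (k, i)) * u k) * (B *ᵥ vv) i := by
    rw [Finset.sum_mul]; exact Finset.sum_congr rfl fun k _ => by ring
  rw [this, key1 i]
  rfl

lemma aux_spectral {q : ℕ} (ρL : Matrix (Fin q) (Fin q) ℂ) (hρherm : ρL.IsHermitian)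
    (lmin : ℝ) (hlmin : 0 < lmin)
    (hminabove : ∀ i, hρherm.eigenvalues i ≠ 0 → lmin ^ 2 ≤ hρherm.eigenvalues i)
    (y : Fin q → ℂ) :
    lmin ^ 2 * (star y ⬝ᵥ (ρL *ᵥ y)).re ≤ (star y ⬝ᵥ ((ρL * ρL) *ᵥ y)).re := by
  set U : Matrix (Fin q) (Fin q) ℂ := (hρherm.eigenvectorUnitary : Matrix (Fin q) (Fin q) ℂ)
    with hUdef
  set d : Fin q → ℂ := RCLike.ofReal ∘ hρherm.eigenvalues with hd
  have hspec : ρL = U * diagonal d * star U := hρherm.spectral_theorem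
  have hUU : star U * U = 1 :=
    (Matrix.mem_unitaryGroup_iff').mp (hρherm.eigenvectorUnitary).2
  set z : Fin q → ℂ := star U *ᵥ y with hzdef
  have hz : star z = star y ᵥ* U := by
    rw [hzdef, star_mulVec, ← Matrix.star_eq_conjTranspose, star_star]
  have hform : ∀ M : Matrix (Fin q) (Fin q) ℂ,
      star y ⬝ᵥ ((U * M * star U) *ᵥ y) = star z ⬝ᵥ (M *ᵥ z) := by
    intro M
    rw [← mulVec_mulVec, ← mulVec_mulVec, dotProduct_mulVec, ← hz]
  have hsq : ρL * ρL = U * (diagonal d * diagonal d) * star U := by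
    rw [hspec]
    simp only [mul_assoc]
    rw [← mul_assoc (star U) U, hUU, one_mul]
  have e1 : star y ⬝ᵥ (ρL *ᵥ y) = star z ⬝ᵥ (diagonal d *ᵥ z) := by
    conv_lhs => rw [hspec]
    exact hform _
  have e2 : star y ⬝ᵥ ((ρL * ρL) *ᵥ y) = star z ⬝ᵥ ((diagonal d * diagonal d) *ᵥ z) := by
    conv_lhs => rw [hsq]
    exact hform _
  have ediag : ∀ d' : Fin q → ℂ,
      star z ⬝ᵥ (diagonal d' *ᵥ z) = ∑ α, star (z α) * (d' α * z α) := by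
    intro d'
    simp [dotProduct, Matrix.mulVec_diagonal]
  have term : ∀ (c w : ℂ), star w * (c * w) = c * ((Complex.normSq w : ℝ) : ℂ) := by
    intro c w
    rw [Complex.star_def, ← Complex.mul_conj w]
    ring
  have hre1 : (star y ⬝ᵥ (ρL *ᵥ y)).re = ∑ α, hρherm.eigenvalues α * Complex.normSq (z α) := by
    rw [e1, ediag, Complex.re_sum]
    refine Finset.sum_congr rfl fun α _ => ?_
    rw [show d α = ((hρherm.eigenvalues α : ℝ) : ℂ) from rfl, term, ← Complex.ofReal_mul,
      Complex.ofReal_re]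
  have hre2 : (star y ⬝ᵥ ((ρL * ρL) *ᵥ y)).re
      = ∑ α, hρherm.eigenvalues α ^ 2 * Complex.normSq (z α) := by
    rw [e2, diagonal_mul_diagonal, ediag, Complex.re_sum]
    refine Finset.sum_congr rfl fun α _ => ?_
    rw [show d α = ((hρherm.eigenvalues α : ℝ) : ℂ) from rfl, term, ← Complex.ofReal_mul,
      ← Complex.ofReal_mul, Complex.ofReal_re]
    ring
  rw [hre1, hre2, Finset.mul_sum]
  refine Finset.sum_le_sum fun α _ => ?_
  by_cases hμ : hρherm.eigenvalues α = 0
  · simp [hμ]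
  · have h1 := hminabove α hμ
    have h2 : (0:ℝ) ≤ Complex.normSq (z α) := Complex.normSq_nonneg _
    have h3 : 0 ≤ hρherm.eigenvalues α := le_trans (by positivity) h1
    nlinarith [mul_nonneg (mul_nonneg h3 (sub_nonneg.2 h1)) h2]

lemma aux_opNorm {p : ℕ} (u : Fin p → ℂ) (sc : ℂ) (r : ℝ) (hr : 0 ≤ r)
    (hb : ‖sc‖ * ‖(WithLp.equiv 2 (Fin p → ℂ)).symm u‖ ^ 2 ≤ r) :
    ‖Matrix.toEuclideanCLM (𝕜 := ℂ) (sc • Matrix.vecMulVec u (star u))‖ ≤ r := by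
  apply ContinuousLinearMap.opNorm_le_bound _ hr
  intro x
  have hmv : ∀ w : Fin p → ℂ,
      (sc • Matrix.vecMulVec u (star u)) *ᵥ w = (sc * (star u ⬝ᵥ w)) • u := by
    intro w
    funext k
    simp only [Matrix.mulVec, dotProduct, Matrix.smul_apply, Pi.smul_apply,
      Matrix.vecMulVec_apply, Pi.star_apply, smul_eq_mul]
    rw [Finset.mul_sum, Finset.sum_mul]
    exact Finset.sum_congr rfl fun l _ => by ring
  set ue : EuclideanSpace ℂ (Fin p) := (WithLp.equiv 2 (Fin p → ℂ)).symm u with hue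
  have hx : x = (WithLp.equiv 2 (Fin p → ℂ)).symm (WithLp.equiv 2 (Fin p → ℂ) x) :=
    (Equiv.symm_apply_apply _ _).symm
  have happ : Matrix.toEuclideanCLM (𝕜 := ℂ) (sc • Matrix.vecMulVec u (star u)) x
      = (sc * (star u ⬝ᵥ (WithLp.equiv 2 (Fin p → ℂ) x))) • ue := by
    conv_lhs => rw [hx]
    rw [WithLp.equiv_symm_apply, Matrix.toEuclideanCLM_toLp, hmv, WithLp.toLp_smul]
    rfl
  rw [happ, norm_smul, norm_mul]
  have hinner : star u ⬝ᵥ (WithLp.equiv 2 (Fin p → ℂ) x) = (inner ℂ ue x : ℂ) := by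
    rw [EuclideanSpace.inner_eq_star_dotProduct, dotProduct_comm]; rfl
  rw [hinner]
  calc ‖sc‖ * ‖(inner ℂ ue x : ℂ)‖ * ‖ue‖ ≤ ‖sc‖ * (‖ue‖ * ‖x‖) * ‖ue‖ := by
        gcongr
        exact norm_inner_le_norm (𝕜 := ℂ) ue x
    _ = ‖sc‖ * ‖ue‖ ^ 2 * ‖x‖ := by ring
    _ ≤ r * ‖x‖ := mul_le_mul_of_nonneg_right hb (norm_nonneg x)

/-- Lemma 1 of the paper: exponential decay of correlations implies that each
eigenvalue `b` of `B_L = P_V B P_V` (restricted to `V = range ρ_L`) satisfies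
`|b - ⟨Ω|B|Ω⟩| ≤ λ_min⁻² δ`. -/
theorem eigenvalue_close_to_expectation {p q : ℕ}
    (Ω : Fin p × Fin q → ℂ) (hnorm : star Ω ⬝ᵥ Ω = 1)
    (ρL : Matrix (Fin q) (Fin q) ℂ)
    (hρL : ρL = fun i j => ∑ k : Fin p, Ω (k, i) * star (Ω (k, j)))
    (hρherm : ρL.IsHermitian)
    (lmin : ℝ) (hlmin : 0 < lmin)
    (hminabove : ∀ i, hρherm.eigenvalues i ≠ 0 → lmin ^ 2 ≤ hρherm.eigenvalues i)
    (hminattain : ∃ i, hρherm.eigenvalues i = lmin ^ 2)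
    (B : Matrix (Fin q) (Fin q) ℂ) (hB : B.IsHermitian)
    (hBnorm : ‖(Matrix.toEuclideanCLM (𝕜 := ℂ)) B‖ ≤ 1)
    (P : Matrix (Fin q) (Fin q) ℂ) (hP : P.IsHermitian) (hP2 : P * P = P)
    (hfix : ∀ y : Fin q → ℂ, P *ᵥ (ρL *ᵥ y) = ρL *ᵥ y)
    (hrange : ∀ x : Fin q → ℂ, ∃ y : Fin q → ℂ, P *ᵥ x = ρL *ᵥ y)
    (b : ℝ) (v : Fin q → ℂ) (hv : v ≠ 0) (hvV : P *ᵥ v = v)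
    (heig : (P * B * P) *ᵥ v = (b : ℂ) • v)
    (δ : ℝ) (hδ : 0 ≤ δ)
    (hdecay : ∀ C : Matrix (Fin p) (Fin p) ℂ,
      ‖(Matrix.toEuclideanCLM (𝕜 := ℂ)) C‖ ≤ (lmin ^ 2)⁻¹ →
      ‖star Ω ⬝ᵥ (((C ⊗ₖ (1 : Matrix (Fin q) (Fin q) ℂ)) *
            ((1 : Matrix (Fin p) (Fin p) ℂ) ⊗ₖ B)) *ᵥ Ω)
          - (star Ω ⬝ᵥ ((C ⊗ₖ (1 : Matrix (Fin q) (Fin q) ℂ)) *ᵥ Ω)) *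
            (star Ω ⬝ᵥ (((1 : Matrix (Fin p) (Fin p) ℂ) ⊗ₖ B) *ᵥ Ω))‖
        ≤ ‖(Matrix.toEuclideanCLM (𝕜 := ℂ)) B‖ *
            ‖(Matrix.toEuclideanCLM (𝕜 := ℂ)) C‖ * δ) :
    ‖(b : ℂ) - star Ω ⬝ᵥ (((1 : Matrix (Fin p) (Fin p) ℂ) ⊗ₖ B) *ᵥ Ω)‖
      ≤ (lmin ^ 2)⁻¹ * δ := by
  obtain ⟨y, hy⟩ := hrange v
  rw [hvV] at hy
  -- hy : v = ρL *ᵥ y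
  have hρ : ∀ i j, ρL i j = ∑ k, Ω (k, i) * star (Ω (k, j)) := fun i j => by rw [hρL]
  set u : Fin p → ℂ := fun k => ∑ i, Ω (k, i) * star (y i) with hu
  have key2 : ∀ j, ∑ l, star (u l) * Ω (l, j) = v j := by
    intro j
    have hul : ∀ l, star (u l) = ∑ i, star (Ω (l, i)) * y i := by
      intro l
      rw [hu]
      simp [star_sum, star_mul', mul_comm]
    calc ∑ l, star (u l) * Ω (l, j) = ∑ l, ∑ i, star (Ω (l, i)) * y i * Ω (l, j) := by
          simp_rw [hul, Finset.sum_mul]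
      _ = ∑ i, ∑ l, star (Ω (l, i)) * y i * Ω (l, j) := Finset.sum_comm
      _ = ∑ i, (∑ l, Ω (l, j) * star (Ω (l, i))) * y i := by
          refine Finset.sum_congr rfl fun i _ => ?_
          rw [Finset.sum_mul]; exact Finset.sum_congr rfl fun l _ => by ring
      _ = ∑ i, ρL j i * y i := by simp_rw [hρ]
      _ = v j := by rw [hy]; rfl
  have key1 : ∀ i, ∑ k, star (Ω (k, i)) * u k = star (v i) := by
    intro i
    calc ∑ k, star (Ω (k, i)) * u k
        = ∑ k, ∑ j, star (Ω (k, i)) * (Ω (k, j) * star (y j)) := by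
          simp_rw [hu, Finset.mul_sum]
      _ = ∑ j, ∑ k, star (Ω (k, i)) * (Ω (k, j) * star (y j)) := Finset.sum_comm
      _ = ∑ j, star (ρL i j * y j) := by
          refine Finset.sum_congr rfl fun j _ => ?_
          rw [star_mul', hρ, star_sum]
          rw [Finset.sum_mul]
          refine Finset.sum_congr rfl fun k _ => ?_
          simp [star_mul', mul_comm, mul_assoc, mul_left_comm]
      _ = star (∑ j, ρL i j * y j) := (star_sum _ _).symm
      _ = star (v i) := by rw [hy]; rfl
  have huu : star u ⬝ᵥ u = star y ⬝ᵥ (ρL *ᵥ y) := by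
    calc star u ⬝ᵥ u = ∑ k, ∑ j, star (u k) * (Ω (k, j) * star (y j)) := by
          simp_rw [dotProduct, Pi.star_apply, hu, Finset.mul_sum]
      _ = ∑ j, ∑ k, star (u k) * (Ω (k, j) * star (y j)) := Finset.sum_comm
      _ = ∑ j, star (y j) * v j := by
          refine Finset.sum_congr rfl fun j _ => ?_
          rw [← key2 j, Finset.mul_sum]
          exact Finset.sum_congr rfl fun k _ => by ring
      _ = star y ⬝ᵥ v := rfl
      _ = star y ⬝ᵥ (ρL *ᵥ y) := by rw [hy]
  have hvv : star v ⬝ᵥ v = star y ⬝ᵥ ((ρL * ρL) *ᵥ y) := by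
    rw [hy, star_mulVec, ← dotProduct_mulVec, mulVec_mulVec, hρherm.eq]
  -- Euclidean vectors and norms
  set ue : EuclideanSpace ℂ (Fin p) := (WithLp.equiv 2 (Fin p → ℂ)).symm u with hue
  set ve : EuclideanSpace ℂ (Fin q) := (WithLp.equiv 2 (Fin q → ℂ)).symm v with hve
  have hsu : star u ⬝ᵥ u = ((‖ue‖ ^ 2 : ℝ) : ℂ) := by
    have h1 : (inner ℂ ue ue : ℂ) = star u ⬝ᵥ u := by
      rw [EuclideanSpace.inner_eq_star_dotProduct, dotProduct_comm]; rfl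
    rw [← h1, inner_self_eq_norm_sq_to_K]
    norm_cast
  have hsv : star v ⬝ᵥ v = ((‖ve‖ ^ 2 : ℝ) : ℂ) := by
    have h1 : (inner ℂ ve ve : ℂ) = star v ⬝ᵥ v := by
      rw [EuclideanSpace.inner_eq_star_dotProduct, dotProduct_comm]; rfl
    rw [← h1, inner_self_eq_norm_sq_to_K]
    norm_cast
  have hvepos : 0 < ‖ve‖ := by
    rw [norm_pos_iff]
    intro h
    apply hv
    have h2 := congrArg (WithLp.equiv 2 (Fin q → ℂ)) h
    rwa [hve, Equiv.apply_symm_apply, WithLp.equiv_apply, WithLp.ofLp_zero] at h2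
  set c2 : ℝ := ‖ve‖ ^ 2 with hc2
  have hc2pos : 0 < c2 := by positivity
  have hc2ne : c2 ≠ 0 := ne_of_gt hc2pos
  set a2 : ℝ := ‖ue‖ ^ 2 with ha2
  -- spectral inequality
  have hspec : lmin ^ 2 * a2 ≤ c2 := by
    have h1 : (star y ⬝ᵥ (ρL *ᵥ y)).re = a2 := by rw [← huu, hsu, Complex.ofReal_re]
    have h2 : (star y ⬝ᵥ ((ρL * ρL) *ᵥ y)).re = c2 := by rw [← hvv, hsv, Complex.ofReal_re]
    have := aux_spectral ρL hρherm lmin hlmin hminabove y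
    rwa [h1, h2] at this
  -- the operator C
  set sc : ℂ := ((c2⁻¹ : ℝ) : ℂ) with hsc
  set Cmat : Matrix (Fin p) (Fin p) ℂ := sc • Matrix.vecMulVec u (star u) with hCmat
  have hCnorm : ‖Matrix.toEuclideanCLM (𝕜 := ℂ) Cmat‖ ≤ (lmin ^ 2)⁻¹ := by
    rw [hCmat]
    apply aux_opNorm u sc _ (by positivity)
    have hnsc : ‖sc‖ = c2⁻¹ := by
      rw [hsc, Complex.norm_real, Real.norm_eq_abs]
      exact abs_of_nonneg (inv_nonneg.2 (le_of_lt hc2pos))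
    rw [hnsc, ← hue, ← ha2]
    have hl2 : (0:ℝ) < lmin ^ 2 := by positivity
    have h3 : a2 ≤ (lmin ^ 2)⁻¹ * c2 := by
      have := mul_le_mul_of_nonneg_left hspec (le_of_lt (inv_pos.2 hl2))
      rwa [← mul_assoc, inv_mul_cancel₀ (ne_of_gt hl2), one_mul] at this
    calc c2⁻¹ * a2 ≤ c2⁻¹ * ((lmin ^ 2)⁻¹ * c2) :=
          mul_le_mul_of_nonneg_left h3 (le_of_lt (inv_pos.2 hc2pos))
      _ = (lmin ^ 2)⁻¹ := by field_simp
  have hinv : ((c2⁻¹ : ℝ) : ℂ) * ((c2 : ℝ) : ℂ) = 1 := by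
    rw [← Complex.ofReal_mul, inv_mul_cancel₀ hc2ne, Complex.ofReal_one]
  -- eigenvalue expectation
  have hbv : star v ⬝ᵥ (B *ᵥ v) = (b : ℂ) * (star v ⬝ᵥ v) := by
    have h1 : star v ᵥ* P = star v := by rw [← hP.eq, ← star_mulVec, hvV]
    have h2 : (P * B * P) *ᵥ v = P *ᵥ (B *ᵥ v) := by
      rw [← Matrix.mulVec_mulVec, hvV, ← Matrix.mulVec_mulVec]
    have h3 := congrArg (fun w => star v ⬝ᵥ w) heig
    rw [h2, dotProduct_mulVec, h1, dotProduct_smul, smul_eq_mul] at h3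
    exact h3
  -- compute the two expectation values
  have Emain : star Ω ⬝ᵥ ((Cmat ⊗ₖ B) *ᵥ Ω) = (b : ℂ) := by
    rw [hCmat, Matrix.smul_kronecker, Matrix.smul_mulVec, dotProduct_smul, smul_eq_mul,
      aux_dot_kron Ω u v B key1 key2, hbv, hsv, hsc]
    linear_combination (b : ℂ) * hinv
  have Eone : star Ω ⬝ᵥ ((Cmat ⊗ₖ (1 : Matrix (Fin q) (Fin q) ℂ)) *ᵥ Ω) = 1 := by
    rw [hCmat, Matrix.smul_kronecker, Matrix.smul_mulVec, dotProduct_smul, smul_eq_mul,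
      aux_dot_kron Ω u v 1 key1 key2, Matrix.one_mulVec, hsv, hsc]
    exact hinv
  -- apply decay hypothesis
  have hd := hdecay Cmat hCnorm
  rw [← Matrix.mul_kronecker_mul, Matrix.mul_one, Matrix.one_mul, Emain, Eone, one_mul] at hd
  calc ‖(b : ℂ) - star Ω ⬝ᵥ (((1 : Matrix (Fin p) (Fin p) ℂ) ⊗ₖ B) *ᵥ Ω)‖
      ≤ ‖(Matrix.toEuclideanCLM (𝕜 := ℂ)) B‖ * ‖(Matrix.toEuclideanCLM (𝕜 := ℂ)) Cmat‖ * δ :=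
        hd
    _ ≤ 1 * (lmin ^ 2)⁻¹ * δ := by
        apply mul_le_mul_of_nonneg_right _ hδ
        exact mul_le_mul hBnorm hCnorm (norm_nonneg _) zero_le_one
    _ = (lmin ^ 2)⁻¹ * δ := by rw [one_mul]
end
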